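/- arXiv:2210.14001 — 4 statements merged into one kernel-verified Lean document; each statement's English description precedes it below -/
import Mathlib

section
/- Let q₁ and q₂ be non-degenerate quadratic forms over ℚ and p a prime. If q₁ ⊗ ℚ_ℓ ≅ q₂ ⊗ ℚ_ℓ for all primes ℓ ≠ p, then q₁ and q₂ have the same discriminant in ℚ×/(ℚ×)². -/
/-!
Isometric diagonal forms have Gram determinants that differ by the square of the determinant of
the isometry, so the ratio `D` of the two discriminants is a square in every `ℚ_ℓ` with `ℓ ≠ p`.
Write `D = r² t` with `t` a squarefree integer. An even `ℓ`-adic valuation forces `ℓ ∤ t` for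
`ℓ ≠ p`, so `t ∈ {±1, ±p}`. Reducing `ℤ_ℓ → 𝔽_ℓ`, `t` is then a square modulo every prime `ℓ ≠ p`,
while for `t ≠ 1` Dirichlet's theorem, combined with quadratic reciprocity, provides a prime
`ℓ ≠ p` modulo which `t` is not a square.
-/

noncomputable section

instance (q : Nat.Primes) : Fact (Nat.Prime (q : ℕ)) := ⟨q.2⟩

/-- The rational diagonal forms `⟨a i⟩` and `⟨b i⟩` become equivalent over `ℚ_ℓ`. -/
def EquivAt {n : ℕ} (a b : Fin n → ℚ) (q : Nat.Primes) : Prop :=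
  (QuadraticMap.weightedSumSquares ℚ_[(q : ℕ)] fun i => (a i : ℚ_[(q : ℕ)])).Equivalent
    (QuadraticMap.weightedSumSquares ℚ_[(q : ℕ)] fun i => (b i : ℚ_[(q : ℕ)]))

section DiagonalForms

open QuadraticMap

variable {R ι : Type*} [CommRing R] [Invertible (2 : R)] [Fintype ι] [DecidableEq ι]

theorem QuadraticForm.toMatrix'_weightedSumSquares (w : ι → R) :
    QuadraticForm.toMatrix' (weightedSumSquares R w) = Matrix.diagonal w := by
  let B : LinearMap.BilinForm R (ι → R) := Matrix.toLinearMap₂' R (Matrix.diagonal w)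
  have hB : weightedSumSquares R w = B.toQuadraticMap := by
    ext x
    simp [B, Matrix.toLinearMap₂'_apply', weightedSumSquares_apply, dotProduct,
      Matrix.mulVec_diagonal, mul_left_comm]
  have hB_symm (x y : ι → R) : B x y = B y x := by
    simp [B, Matrix.toLinearMap₂'_apply', dotProduct, Matrix.mulVec_diagonal, mul_left_comm,
      mul_comm]
  rw [QuadraticForm.toMatrix', hB, associated_left_inverse _ hB_symm,
    LinearMap.toMatrix'_toLinearMap₂']

theorem QuadraticForm.discr'_weightedSumSquares (w : ι → R) :
    QuadraticForm.discr' (weightedSumSquares R w) = ∏ i, w i := by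
  rw [QuadraticForm.discr', toMatrix'_weightedSumSquares, Matrix.det_diagonal]

theorem QuadraticMap.Equivalent.exists_prod_eq_sq_mul_prod {w₁ w₂ : ι → R}
    (h : (weightedSumSquares R w₁).Equivalent (weightedSumSquares R w₂)) :
    ∃ c : R, IsUnit c ∧ ∏ i, w₁ i = c ^ 2 * ∏ i, w₂ i := by
  obtain ⟨f⟩ := h
  have hcomp : weightedSumSquares R w₁ = (weightedSumSquares R w₂).comp f.toLinearMap := by
    ext x
    exact (f.map_app x).symm
  refine ⟨LinearMap.det f.toLinearMap, LinearEquiv.isUnit_det' f.toLinearEquiv, ?_⟩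
  have := QuadraticForm.discr'_comp (Q := weightedSumSquares R w₂) f.toLinearMap
  rw [← hcomp, QuadraticForm.discr'_weightedSumSquares, QuadraticForm.discr'_weightedSumSquares,
    LinearMap.det_toMatrix'] at this
  rw [this, pow_two]

end DiagonalForms

namespace Padic

variable {p : ℕ} [Fact p.Prime]

theorem even_valuation_of_isSquare {x : ℚ_[p]} (hx : IsSquare x) : Even x.valuation := by
  obtain ⟨y, rfl⟩ := hx
  rcases eq_or_ne y 0 with rfl | hy
  · simp
  · exact ⟨_, valuation_mul hy hy⟩

theorem isSquare_intCast_zmod_of_isSquare {t : ℤ} (h : IsSquare (t : ℚ_[p])) :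
    IsSquare (t : ZMod p) := by
  obtain ⟨y, hy⟩ := h
  have hy_le : ‖y‖ ≤ 1 := by
    have : ‖y‖ * ‖y‖ ≤ 1 := by rw [← norm_mul, ← hy]; exact norm_int_le_one t
    nlinarith [norm_nonneg y]
  let z : ℤ_[p] := ⟨y, hy_le⟩
  have hz : (t : ℤ_[p]) = z * z := PadicInt.ext (by simpa using hy)
  exact ⟨PadicInt.toZMod z, by simpa using congrArg PadicInt.toZMod hz⟩

end Padic

theorem Int.not_dvd_of_squarefree_of_isSquare_padic {p : ℕ} [hp : Fact p.Prime] {t : ℤ}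
    (ht : Squarefree t) (h : IsSquare (t : ℚ_[p])) : ¬(p : ℤ) ∣ t := by
  intro hpt
  obtain ⟨k, hk⟩ := Padic.even_valuation_of_isSquare h
  rw [Padic.valuation_intCast] at hk
  have h_one : 1 ≤ padicValInt p t :=
    ((padicValInt_dvd_iff 1 t).mp (by simpa using hpt)).resolve_left ht.ne_zero
  have h_sq : (p : ℤ) ^ 2 ∣ t := (padicValInt_dvd_iff 2 t).mpr (Or.inr (by omega))
  rw [pow_two] at h_sq
  exact (Nat.prime_iff_prime_int.mp hp.out).not_isUnit (ht _ h_sq)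

theorem Nat.dvd_of_squarefree_of_forall_prime_dvd_eq {n p : ℕ} (hn : Squarefree n)
    (h : ∀ q, q.Prime → q ∣ n → q = p) : n ∣ p := by
  have hsub : n.primeFactors ⊆ {p} := fun q hq =>
    Finset.mem_singleton.mpr (h q (prime_of_mem_primeFactors hq) (dvd_of_mem_primeFactors hq))
  simpa [prod_primeFactors_of_squarefree hn] using Finset.prod_dvd_prod_of_subset _ _ id hsub

theorem exists_prime_gt_not_isSquare_neg_one (n : ℕ) :
    ∃ ℓ > n, ℓ.Prime ∧ ¬IsSquare (-1 : ZMod ℓ) := by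
  obtain ⟨ℓ, hℓn, hℓ, hℓ3⟩ :=
    Nat.forall_exists_prime_gt_and_modEq n (q := 4) (a := 3) (by norm_num) (by norm_num)
  have := Fact.mk hℓ
  exact ⟨ℓ, hℓn, hℓ, by rw [ZMod.exists_sq_eq_neg_one_iff]; exact not_not.mpr hℓ3⟩

theorem exists_prime_not_isSquare_two_and_neg_two :
    ∃ ℓ > 2, ℓ.Prime ∧ ¬IsSquare (2 : ZMod ℓ) ∧ ¬IsSquare (-2 : ZMod ℓ) := by
  obtain ⟨ℓ, hℓn, hℓ, hℓ5⟩ :=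
    Nat.forall_exists_prime_gt_and_modEq 2 (q := 8) (a := 5) (by norm_num) (by norm_num)
  have := Fact.mk hℓ
  unfold Nat.ModEq at hℓ5
  refine ⟨ℓ, hℓn, hℓ, ?_, ?_⟩
  · rw [ZMod.exists_sq_eq_two_iff hℓn.ne']; omega
  · rw [ZMod.exists_sq_eq_neg_two_iff hℓn.ne']; omega

theorem exists_prime_gt_mod_four_eq_one_not_isSquare (p : ℕ) [hp : Fact p.Prime] (hp2 : p ≠ 2) :
    ∃ ℓ > p, ℓ.Prime ∧ ℓ % 4 = 1 ∧ ¬IsSquare (ℓ : ZMod p) := by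
  obtain ⟨r, hr⟩ := FiniteField.exists_nonsquare (F := ZMod p) (by rwa [ZMod.ringChar_zmod_n])
  have hr0 : r ≠ 0 := fun h => hr (h ▸ IsSquare.zero)
  have hcop : Nat.Coprime 4 p :=
    Nat.Coprime.pow_left 2 ((Nat.coprime_primes Nat.prime_two hp.out).mpr hp2.symm)
  let e := ZMod.chineseRemainder hcop
  have hunit : IsUnit (e.symm (1, r)) :=
    (Prod.isUnit_iff.mpr ⟨isUnit_one, hr0.isUnit⟩).map e.symm
  have : NeZero (4 * p) := ⟨by have := hp.out.pos; positivity⟩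
  obtain ⟨ℓ, hℓp, hℓ, hℓr⟩ := Nat.forall_exists_prime_gt_and_eq_mod hunit p
  obtain ⟨hℓ4, hℓr⟩ : (ℓ : ZMod 4) = 1 ∧ (ℓ : ZMod p) = r := by
    simpa [e, Prod.ext_iff] using congrArg e hℓr
  refine ⟨ℓ, hℓp, hℓ, ?_, by rwa [hℓr]⟩
  simpa using (ZMod.natCast_eq_natCast_iff' ℓ 1 4).mp (by simpa using hℓ4)

theorem exists_prime_ne_not_isSquare_of_natAbs_eq {p : ℕ} [hp : Fact p.Prime] {t : ℤ}
    (ht : t.natAbs = p) : ∃ ℓ, ℓ.Prime ∧ ℓ ≠ p ∧ ¬IsSquare (t : ZMod ℓ) := by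
  rcases eq_or_ne p 2 with rfl | hp2
  · obtain ⟨ℓ, hℓ2, hℓ, h2, hneg2⟩ := exists_prime_not_isSquare_two_and_neg_two
    refine ⟨ℓ, hℓ, hℓ2.ne', ?_⟩
    rcases Int.natAbs_eq_iff.mp ht with rfl | rfl
    · simpa using h2
    · simpa using hneg2
  · obtain ⟨ℓ, hℓp, hℓ, hℓ4, hns⟩ := exists_prime_gt_mod_four_eq_one_not_isSquare p hp2
    have := Fact.mk hℓ
    have hp_ns : ¬IsSquare (p : ZMod ℓ) := by
      rwa [ZMod.exists_sq_eq_prime_iff_of_mod_four_eq_one hℓ4 hp2]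
    have hneg_one : IsSquare (-1 : ZMod ℓ) := ZMod.exists_sq_eq_neg_one_iff.mpr (by omega)
    refine ⟨ℓ, hℓ, hℓp.ne', ?_⟩
    rcases Int.natAbs_eq_iff.mp ht with rfl | rfl
    · simpa using hp_ns
    · exact fun h => hp_ns (by simpa using hneg_one.mul h)

theorem Int.eq_one_of_squarefree_of_forall_isSquare_padic (p : ℕ) [hp : Fact p.Prime] {t : ℤ}
    (ht : Squarefree t) (h : ∀ (ℓ : ℕ) [Fact ℓ.Prime], ℓ ≠ p → IsSquare (t : ℚ_[ℓ])) : t = 1 := by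
  have ht_dvd : t.natAbs ∣ p := by
    refine Nat.dvd_of_squarefree_of_forall_prime_dvd_eq (Int.squarefree_natAbs.mpr ht)
      fun q hq hqt => ?_
    have := Fact.mk hq
    by_contra hqp
    exact Int.not_dvd_of_squarefree_of_isSquare_padic ht (h q hqp) (Int.natCast_dvd.mpr hqt)
  have isSquare_zmod {ℓ : ℕ} (hℓ : ℓ.Prime) (hℓp : ℓ ≠ p) : IsSquare (t : ZMod ℓ) :=
    have := Fact.mk hℓ
    Padic.isSquare_intCast_zmod_of_isSquare (h ℓ hℓp)
  rcases (Nat.dvd_prime hp.out).mp ht_dvd with ht1 | htp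
  · by_contra hne
    obtain rfl : t = -1 := by omega
    obtain ⟨ℓ, hℓp, hℓ, hns⟩ := exists_prime_gt_not_isSquare_neg_one p
    exact hns (by simpa using isSquare_zmod hℓ hℓp.ne')
  · obtain ⟨ℓ, hℓ, hℓp, hns⟩ := exists_prime_ne_not_isSquare_of_natAbs_eq htp
    exact (hns (isSquare_zmod hℓ hℓp)).elim

theorem Rat.exists_eq_sq_mul_squarefree {D : ℚ} (hD : D ≠ 0) :
    ∃ (r : ℚ) (t : ℤ), r ≠ 0 ∧ Squarefree t ∧ D = r ^ 2 * t := by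
  obtain ⟨t₀, s, hst, ht₀⟩ := Nat.sq_mul_squarefree (D.num * D.den).natAbs
  have hnum : D.num ≠ 0 := Rat.num_ne_zero.mpr hD
  have hs : s ≠ 0 := by
    rintro rfl
    exact absurd hst.symm (by simp [hnum, D.den_nz])
  refine ⟨s / D.den, D.num.sign * t₀, by simp [hs, D.den_nz], ?_, ?_⟩
  · rwa [← Int.squarefree_natAbs, Int.natAbs_mul, Int.natAbs_sign_of_ne_zero hnum, one_mul,
      Int.natAbs_natCast]
  · have habs : (s : ℤ) ^ 2 * t₀ = D.num.natAbs * D.den := by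
      rw [Int.natAbs_mul, Int.natAbs_natCast] at hst
      exact_mod_cast hst
    have hint : (s : ℤ) ^ 2 * (D.num.sign * t₀) = D.num * D.den := by
      rw [mul_left_comm, habs, ← mul_assoc, Int.sign_mul_natAbs]
    have hrat : (s : ℚ) ^ 2 * ((D.num.sign * t₀ : ℤ) : ℚ) = D.num * D.den := by
      exact_mod_cast hint
    rw [div_pow, div_mul_eq_mul_div, hrat, ← Rat.mul_den_eq_num D]
    field_simp [D.den_nz]

theorem Rat.isSquare_of_forall_isSquare_padic (p : ℕ) [Fact p.Prime] {D : ℚ}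
    (h : ∀ (ℓ : ℕ) [Fact ℓ.Prime], ℓ ≠ p → IsSquare (D : ℚ_[ℓ])) : IsSquare D := by
  rcases eq_or_ne D 0 with rfl | hD
  · exact IsSquare.zero
  obtain ⟨r, t, hr, ht, rfl⟩ := Rat.exists_eq_sq_mul_squarefree hD
  obtain rfl : t = 1 := Int.eq_one_of_squarefree_of_forall_isSquare_padic p ht fun ℓ _ hℓp => by
    have hr' : (r : ℚ_[ℓ]) ^ 2 ≠ 0 := pow_ne_zero 2 (Rat.cast_ne_zero.mpr hr)
    simpa [hr'] using (h ℓ hℓp).div (IsSquare.sq (r : ℚ_[ℓ]))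
  exact ⟨r, by simp [sq]⟩

theorem Rat.exists_ne_zero_eq_sq_mul_of_forall_padic (p : ℕ) [Fact p.Prime] {x y : ℚ}
    (h : ∀ (ℓ : ℕ) [Fact ℓ.Prime], ℓ ≠ p → ∃ c : ℚ_[ℓ], c ≠ 0 ∧ (x : ℚ_[ℓ]) = c ^ 2 * y) :
    ∃ c : ℚ, c ≠ 0 ∧ x = c ^ 2 * y := by
  obtain ⟨ℓ, hℓp, hℓ⟩ := Nat.exists_infinite_primes (p + 1)
  have := Fact.mk hℓ
  obtain ⟨c, hc, hxy⟩ := h ℓ (by omega)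
  have hx_iff : x = 0 ↔ y = 0 := by simpa [hc] using congrArg (· = 0) hxy
  rcases eq_or_ne y 0 with rfl | hy
  · exact ⟨1, one_ne_zero, by simpa using hx_iff⟩
  obtain ⟨d, hd⟩ := Rat.isSquare_of_forall_isSquare_padic p (D := x / y) fun ℓ _ hℓp => by
    obtain ⟨c, -, hc⟩ := h ℓ hℓp
    exact ⟨c, by push_cast; rw [hc]; field_simp [hy]⟩
  refine ⟨d, ?_, ?_⟩
  · rintro rfl
    exact hy (hx_iff.mp (by simpa [hy] using hd))
  · rw [sq, ← hd]
    field_simp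

theorem discriminants_eq_of_equiv_away_general {n : ℕ} (a b : Fin n → ℚ) (p : Nat.Primes)
    (hloc : ∀ l : Nat.Primes, l ≠ p → EquivAt a b l) :
    ∃ c : ℚ, c ≠ 0 ∧ (∏ i, a i) = c ^ 2 * ∏ i, b i := by
  refine Rat.exists_ne_zero_eq_sq_mul_of_forall_padic p fun ℓ hℓ hℓp => ?_
  let : Invertible (2 : ℚ_[ℓ]) := invertibleOfNonzero two_ne_zero
  have hequiv : EquivAt a b ⟨ℓ, hℓ.out⟩ := hloc _ fun h => hℓp (congrArg Subtype.val h)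
  obtain ⟨c, hc, habc⟩ := hequiv.exists_prod_eq_sq_mul_prod
  exact ⟨c, hc.ne_zero, by push_cast; exact habc⟩

/-- Let `q₁ = ⟨a i⟩` and `q₂ = ⟨b i⟩` be non-degenerate quadratic
forms over `ℚ` (of the same rank `n`) and `p` a prime. If `q₁ ⊗ ℚ_ℓ ≅ q₂ ⊗ ℚ_ℓ` for
all primes `ℓ ≠ p`, then `q₁` and `q₂` have the same discriminant in `ℚ^×/(ℚ^×)²`. -/
theorem discriminants_eq_of_equiv_away {n : ℕ} (a b : Fin n → ℚ) (ha : ∀ i, a i ≠ 0)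
    (hb : ∀ i, b i ≠ 0) (p : Nat.Primes)
    (hloc : ∀ l : Nat.Primes, l ≠ p → EquivAt a b l) :
    ∃ c : ℚ, c ≠ 0 ∧ (∏ i, a i) = c ^ 2 * ∏ i, b i :=
  discriminants_eq_of_equiv_away_general a b p hloc

end
end

section
/- An element a ∈ ℚ in ℚ×/(ℚ×)² is a square in ℚ if and only if it is a square in ℚ_ℓ for all primes ℓ except possibly one fixed prime p. -/
/-!
Write `a = d * r ^ 2` with `d` a squarefree integer. A square in `ℚ_ℓ` has even `ℓ`-adic
valuation, so `d ∈ {±1, ±p}`. If `d ≠ 1` there is a prime `ℓ ≠ p` modulo which `d` is not a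
square, whereas a square root of `d` in `ℚ_ℓ` lies in `ℤ_ℓ` and reduces to one in `ZMod ℓ`.
For `d = -1` take `ℓ ≡ 3 mod 4`. For `d = ±p`, Dirichlet's theorem gives a prime `ℓ ≡ 1 mod 4`
that is not a square modulo `p`; by quadratic reciprocity `p` is then not a square modulo `ℓ`,
and neither is `-p` because `-1` is.
-/

noncomputable section

section Padic

variable {p : ℕ} [Fact p.Prime]

theorem Padic.even_valuation_of_isSquare_s6 {x : ℚ_[p]} (hx : IsSquare x) :
    Even x.valuation := by
  obtain ⟨y, rfl⟩ := hx
  rw [← sq, Padic.valuation_pow]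
  exact even_two_mul _

theorem PadicInt.isSquare_of_isSquare_coe {x : ℤ_[p]}
    (hx : IsSquare (x : ℚ_[p])) : IsSquare x := by
  obtain ⟨y, hy⟩ := hx
  have hy1 : ‖y‖ ≤ 1 := by
    have : ‖y‖ * ‖y‖ ≤ 1 := by rw [← norm_mul, ← hy]; exact x.norm_le_one
    nlinarith [norm_nonneg y]
  exact ⟨⟨y, hy1⟩, Subtype.ext hy⟩

theorem ZMod.isSquare_intCast_of_isSquare_padic {d : ℤ}
    (hd : IsSquare (d : ℚ_[p])) : IsSquare (d : ZMod p) := by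
  have : IsSquare (d : ℤ_[p]) := PadicInt.isSquare_of_isSquare_coe (by simpa using hd)
  simpa using this.map (PadicInt.toZMod (p := p))

end Padic

theorem isSquare_mul_sq_iff {G₀ : Type*} [CommGroupWithZero G₀] {a r : G₀} (hr : r ≠ 0) :
    IsSquare (a * r ^ 2) ↔ IsSquare a := by
  refine ⟨fun h ↦ ?_, fun h ↦ h.mul (IsSquare.sq r)⟩
  simpa [hr] using h.mul (IsSquare.sq r⁻¹)

theorem Rat.exists_squarefree_mul_sq {a : ℚ} (ha : a ≠ 0) :
    ∃ d : ℤ, Squarefree d ∧ ∃ r : ℚ, r ≠ 0 ∧ a = d * r ^ 2 := by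
  set N : ℤ := a.num * a.den
  have hN : N ≠ 0 := mul_ne_zero (Rat.num_ne_zero.mpr ha) (by exact_mod_cast a.den_nz)
  obtain ⟨s, b, hbs, hs⟩ := Nat.sq_mul_squarefree N.natAbs
  have hb : b ≠ 0 := by rintro rfl; exact hN (Int.natAbs_eq_zero.mp (by simpa using hbs.symm))
  refine ⟨N.sign * s, ?_, b / a.den, by positivity, ?_⟩
  · rw [← Int.squarefree_natAbs, Int.natAbs_mul, Int.natAbs_sign_of_ne_zero hN]
    simpa using hs
  · have hsign : (N : ℚ) = N.sign * s * b ^ 2 := by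
      have := Int.sign_mul_natAbs N
      rw [← hbs] at this
      push_cast at this
      exact_mod_cast (by linear_combination -this : N = N.sign * s * b ^ 2)
    have hden : (N : ℚ) = a * a.den ^ 2 := by
      rw [Int.cast_mul, Int.cast_natCast, ← Rat.mul_den_eq_num]
      ring
    have hden0 : (a.den : ℚ) ≠ 0 := by positivity
    field_simp
    push_cast
    linear_combination hsign - hden

theorem Int.natAbs_dvd_prime_of_squarefree_of_even_padicValInt {d : ℤ} (hd : Squarefree d) {p : ℕ}
    (hp : p.Prime) (heven : ∀ q, q.Prime → q ≠ p → Even (padicValInt q d)) : d.natAbs ∣ p := by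
  have hn : Squarefree d.natAbs := Int.squarefree_natAbs.mpr hd
  rw [← Nat.factorization_le_iff_dvd hn.ne_zero hp.ne_zero, Finsupp.le_def]
  intro q
  have hle := hn.natFactorization_le_one q
  by_cases hqp : q = p
  · subst hqp
    rw [hp.factorization_self]
    exact hle
  by_cases hq : q.Prime
  · have := heven q hq hqp
    rw [padicValInt, ← Nat.factorization_def _ hq] at this
    obtain ⟨k, hk⟩ := this
    omega
  · simp [Nat.factorization_eq_zero_of_not_prime _ hq]

theorem Nat.exists_prime_gt_natCast_eq_and_natCast_eq {m n : ℕ} [NeZero m] [NeZero n]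
    (hmn : m.Coprime n) {u : ZMod m} {v : ZMod n} (hu : IsUnit u) (hv : IsUnit v) (N : ℕ) :
    ∃ ℓ > N, ℓ.Prime ∧ (ℓ : ZMod m) = u ∧ (ℓ : ZMod n) = v := by
  let e := ZMod.chineseRemainder hmn
  have hc : IsUnit (e.symm (u, v)) := (Prod.isUnit_iff.mpr ⟨hu, hv⟩).map e.symm
  obtain ⟨ℓ, hℓN, hℓ, hℓc⟩ := Nat.forall_exists_prime_gt_and_eq_mod hc N
  have := congrArg e hℓc
  rw [map_natCast, RingEquiv.apply_symm_apply] at this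
  exact ⟨ℓ, hℓN, hℓ, congrArg Prod.fst this, congrArg Prod.snd this⟩

theorem isSquare_of_isSquare_neg {R : Type*} [CommMonoid R] [HasDistribNeg R] {x : R}
    (h1 : IsSquare (-1 : R)) (hx : IsSquare (-x)) : IsSquare x := by
  simpa using h1.mul hx

theorem exists_prime_ne_not_isSquare_neg_one (p : ℕ) :
    ∃ ℓ, ℓ.Prime ∧ ℓ ≠ p ∧ ¬IsSquare (-1 : ZMod ℓ) := by
  by_cases hp : p = 3
  · exact ⟨7, by norm_num, by omega, by decide⟩
  · exact ⟨3, by norm_num, Ne.symm hp, by decide⟩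

theorem Nat.Prime.exists_prime_mod_four_eq_one_not_isSquare {p : ℕ} (hp : p.Prime) :
    ∃ ℓ, ℓ.Prime ∧ ℓ ≠ p ∧ ℓ % 4 = 1 ∧ ¬IsSquare (p : ZMod ℓ) := by
  rcases hp.eq_two_or_odd' with rfl | hodd
  · exact ⟨5, by norm_num, by norm_num, by norm_num, by decide⟩
  have := Fact.mk hp
  have hp2 : p ≠ 2 := by rintro rfl; norm_num at hodd
  obtain ⟨v, hv⟩ := FiniteField.exists_nonsquare (F := ZMod p) (by rwa [ZMod.ringChar_zmod_n])
  have hv0 : v ≠ 0 := by rintro rfl; exact hv .zero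
  have hcop : Nat.Coprime 4 p :=
    Nat.Coprime.pow_left 2 ((Nat.coprime_primes Nat.prime_two hp).mpr hp2.symm)
  obtain ⟨ℓ, hℓp, hℓ, hℓ4, hℓv⟩ :=
    Nat.exists_prime_gt_natCast_eq_and_natCast_eq hcop isUnit_one hv0.isUnit p
  have := Fact.mk hℓ
  have h4 : ℓ % 4 = 1 := by
    simpa using (ZMod.natCast_eq_natCast_iff' ℓ 1 4).mp (by simpa using hℓ4)
  refine ⟨ℓ, hℓ, hℓp.ne', h4, ?_⟩
  rwa [ZMod.exists_sq_eq_prime_iff_of_mod_four_eq_one h4 hp2, hℓv]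

theorem Int.exists_prime_ne_not_isSquare_of_natAbs_dvd {p : ℕ} (hp : p.Prime) {d : ℤ}
    (hdp : d.natAbs ∣ p) (hd1 : d ≠ 1) : ∃ ℓ, ℓ.Prime ∧ ℓ ≠ p ∧ ¬IsSquare (d : ZMod ℓ) := by
  rcases (Nat.dvd_prime hp).mp hdp with h | h <;>
    rcases Int.natAbs_eq d with hd | hd <;> rw [h] at hd <;> subst hd
  · exact absurd rfl hd1
  · simpa using exists_prime_ne_not_isSquare_neg_one p
  · obtain ⟨ℓ, hℓ, hℓp, -, hns⟩ := hp.exists_prime_mod_four_eq_one_not_isSquare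
    exact ⟨ℓ, hℓ, hℓp, by simpa using hns⟩
  · obtain ⟨ℓ, hℓ, hℓp, hℓ4, hns⟩ := hp.exists_prime_mod_four_eq_one_not_isSquare
    have := Fact.mk hℓ
    have h1 : IsSquare (-1 : ZMod ℓ) := ZMod.exists_sq_eq_neg_one_iff.mpr (by omega)
    exact ⟨ℓ, hℓ, hℓp, fun h ↦ hns (isSquare_of_isSquare_neg h1 (by simpa using h))⟩

/-- A nonzero rational number `a` is a square in `ℚ` if (and only
if) it is a square in `ℚ_ℓ` for all primes `ℓ` different from one fixed prime `p`. -/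
theorem rat_is_square_of_is_square_away (a : ℚ) (ha : a ≠ 0) (p : Nat.Primes)
    (hloc : ∀ l : Nat.Primes, l ≠ p → ∃ x : ℚ_[(l : ℕ)], (a : ℚ_[(l : ℕ)]) = x ^ 2) :
    ∃ x : ℚ, a = x ^ 2 := by
  obtain ⟨d, hd, r, hr, rfl⟩ := Rat.exists_squarefree_mul_sq ha
  have hdloc (ℓ : ℕ) [Fact ℓ.Prime] (hℓp : ℓ ≠ p) : IsSquare (d : ℚ_[ℓ]) := by
    obtain ⟨x, hx⟩ := hloc ⟨ℓ, Fact.out⟩ (fun h ↦ hℓp (congrArg Subtype.val h))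
    rw [← isSquare_mul_sq_iff (Rat.cast_ne_zero.mpr hr)]
    exact ⟨x, by simpa [sq] using hx⟩
  have hdp : d.natAbs ∣ p := Int.natAbs_dvd_prime_of_squarefree_of_even_padicValInt hd p.2
    fun q hq hqp ↦ by
      have := Fact.mk hq
      simpa [Padic.valuation_intCast] using Padic.even_valuation_of_isSquare_s6 (hdloc q hqp)
  by_cases hd1 : d = 1
  · exact ⟨r, by simp [hd1]⟩
  obtain ⟨ℓ, hℓ, hℓp, hns⟩ := Int.exists_prime_ne_not_isSquare_of_natAbs_dvd p.2 hdp hd1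
  have := Fact.mk hℓ
  exact absurd (ZMod.isSquare_intCast_of_isSquare_padic (hdloc ℓ hℓp)) hns

end
end

section
/- Let F be a p-adic field with a nontrivial involution * with fixed field F₀, and let (V, q) be a CM-quadratic space with respect to F, i.e. V is a 1-dimensional F-vector space regarded over ℚ_p, q is a non-degenerate ℚ_p-quadratic form on V, and the q-adjoint of multiplication by α ∈ F is multiplication by α*. Then, after choosing a nonzero v ∈ V and identifying V ≅ F, there exists a unique a ∈ F₀× such that q(x) = Tr_{F₀/ℚ_p}(a·N_{F/F₀}(x)) for all x ∈ F. -/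
/-!
The trace form of `F/ℚ_p` is nondegenerate, so the functional `polar q 1` is `y ↦ Tr(c y)` for
some `c ∈ F`, and the CM condition `polar q x y = polar q 1 (σ x * y)` turns this into
`polar q x y = Tr(c σ(x) y)`. Symmetry of the polar form together with `Tr ∘ σ = Tr` forces
`σ c = c`, nondegeneracy of `q` forces `c ≠ 0`, and `q x = polar q x x / 2` gives the formula.
Uniqueness: if `σ d = d` and `Tr(d x σ(x)) = 0` for all `x`, polarising at `1` and `x` gives
`Tr(d x) + Tr(d σ(x)) = 2 Tr(d x) = 0`, hence `d = 0`.
-/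

open Algebra

section Trace

variable {K F : Type*} [Field K] [Field F] [Algebra K F] [FiniteDimensional K F]
  [Algebra.IsSeparable K F]

theorem Algebra.eq_zero_of_forall_trace_mul_eq_zero {d : F} (h : ∀ y, trace K F (d * y) = 0) :
    d = 0 :=
  (traceForm_nondegenerate K F).1 d fun y => by simpa [traceForm_apply] using h y

theorem Algebra.exists_forall_trace_mul_eq (L : Module.Dual K F) :
    ∃ c : F, ∀ y, trace K F (c * y) = L y :=
  ⟨_, LinearMap.BilinForm.apply_toDual_symm_apply (hB := traceForm_nondegenerate K F) L⟩

variable [NeZero (2 : K)] (σ : F ≃ₐ[K] F)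

theorem Algebra.eq_of_forall_trace_mul_mul_conj_eq {a b : F} (ha : σ a = a) (hb : σ b = b)
    (h : ∀ x, trace K F (a * (x * σ x)) = trace K F (b * (x * σ x))) : a = b := by
  set d := a - b
  have hσd : σ d = d := by simp only [d, map_sub, ha, hb]
  have hnorm (x : F) : trace K F (d * (x * σ x)) = 0 := by
    simp only [d, sub_mul, map_sub, h, sub_self]
  have hconj (x : F) : trace K F (d * σ x) = trace K F (d * x) := by
    rw [← trace_eq_of_algEquiv σ (d * x), map_mul σ, hσd]
  have htrace (x : F) : trace K F (d * x) = 0 := by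
    have hpolar := hnorm (1 + x)
    have hexpand : d * ((1 + x) * σ (1 + x)) =
        d * (1 * σ 1) + d * (x * σ x) + (d * x + d * σ x) := by
      rw [map_add, map_one]; ring
    rw [hexpand, map_add, map_add, map_add, hnorm 1, hnorm x, hconj] at hpolar
    have : (2 : K) * trace K F (d * x) = 0 := by linear_combination hpolar
    exact (mul_eq_zero.mp this).resolve_left two_ne_zero
  exact sub_eq_zero.mp (eq_zero_of_forall_trace_mul_eq_zero htrace)

end Trace

section CMQuadraticSpace

variable {K F : Type*} [Field K] [Field F] [Algebra K F] [FiniteDimensional K F]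
  [Algebra.IsSeparable K F] {σ : F ≃ₐ[K] F} {q : QuadraticForm K F}

theorem QuadraticMap.exists_polar_eq_trace_mul_conj_mul
    (hCM : ∀ α x y : F, polar q (α * x) y = polar q x (σ α * y)) :
    ∃ c : F, ∀ x y, polar q x y = trace K F (c * (σ x * y)) := by
  obtain ⟨c, hc⟩ := exists_forall_trace_mul_eq (K := K) (polarBilin q 1)
  refine ⟨c, fun x y => ?_⟩
  rw [hc, polarBilin_apply_apply, ← hCM, mul_one]

theorem QuadraticMap.conj_eq_self_of_polar_eq_trace (hσ : ∀ x, σ (σ x) = x) {c : F}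
    (hc : ∀ x y, polar q x y = trace K F (c * (σ x * y))) : σ c = c := by
  have hsymm (x : F) : trace K F (c * σ x) = trace K F (c * x) := by
    simpa using (hc x 1).symm.trans ((polar_comm _ _ _).trans (hc 1 x))
  refine sub_eq_zero.mp (eq_zero_of_forall_trace_mul_eq_zero (K := K) fun y => ?_)
  rw [sub_mul, map_sub, ← hsymm y, ← trace_eq_of_algEquiv σ (c * σ y), map_mul σ, hσ, sub_self]

end CMQuadraticSpace

theorem cm_quadratic_form_gauge_general (p : ℕ) [Fact p.Prime] (F : Type*) [Field F]
    [Algebra ℚ_[p] F] [FiniteDimensional ℚ_[p] F] (σ : F ≃ₐ[ℚ_[p]] F)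
    (hσinv : ∀ x, σ (σ x) = x)
    (q : QuadraticForm ℚ_[p] F)
    (hnd : ∀ x : F, (∀ y : F, QuadraticMap.polar q x y = 0) → x = 0)
    (hCM : ∀ (α x y : F), QuadraticMap.polar q (α * x) y = QuadraticMap.polar q x (σ α * y)) :
    ∃! a : F, σ a = a ∧ a ≠ 0 ∧
      ∀ x : F, q x = (1 / 2) * Algebra.trace ℚ_[p] F (a * (x * σ x)) := by
  obtain ⟨c, hc⟩ := QuadraticMap.exists_polar_eq_trace_mul_conj_mul hCM
  have hσc : σ c = c := QuadraticMap.conj_eq_self_of_polar_eq_trace hσinv hc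
  have hc0 : c ≠ 0 := by
    rintro rfl
    exact one_ne_zero (hnd 1 fun y => by simp [hc])
  have hq (x : F) : q x = (1 / 2) * trace ℚ_[p] F (c * (x * σ x)) := by
    have hself := hc x x
    rw [QuadraticMap.polar_self, two_smul, mul_comm (σ x)] at hself
    linear_combination hself / 2
  refine ⟨c, ⟨hσc, hc0, hq⟩, fun a ⟨hσa, _, hqa⟩ => eq_of_forall_trace_mul_mul_conj_eq σ hσa hσc ?_⟩
  intro x
  linear_combination 2 * (hqa x).symm.trans (hq x)

/-- Let `F` be a `p`-adic field with nontrivial involution `σ` and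
fixed field `F₀`, and let `(V, q)` be a CM-quadratic space with respect to `F`.
After choosing a nonzero vector and identifying `V ≅ F`, there is a unique
`a ∈ F₀^×` such that `q(x) = Tr_{F₀/ℚ_p}(a·N_{F/F₀}(x))` for every `x ∈ F`.

Here `V = F`, `N_{F/F₀}(x) = x·σ(x)`, and since `[F : F₀] = 2` the trace from `F₀`
is expressed as `Tr_{F₀/ℚ_p}(z) = (1/2)·Tr_{F/ℚ_p}(z)` for `z ∈ F₀`;
`a ∈ F₀` is expressed by `σ a = a`. -/
theorem cm_quadratic_form_gauge (p : ℕ) [Fact p.Prime] (F : Type*) [Field F]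
    [Algebra ℚ_[p] F] [FiniteDimensional ℚ_[p] F] (σ : F ≃ₐ[ℚ_[p]] F)
    (hσinv : ∀ x, σ (σ x) = x) (hσne : σ ≠ AlgEquiv.refl)
    (q : QuadraticForm ℚ_[p] F)
    (hnd : ∀ x : F, (∀ y : F, QuadraticMap.polar q x y = 0) → x = 0)
    (hCM : ∀ (α x y : F), QuadraticMap.polar q (α * x) y = QuadraticMap.polar q x (σ α * y)) :
    ∃! a : F, σ a = a ∧ a ≠ 0 ∧
      ∀ x : F, q x = (1 / 2) * Algebra.trace ℚ_[p] F (a * (x * σ x)) :=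
  cm_quadratic_form_gauge_general p F σ hσinv q hnd hCM
end

section
/- Let (V, q) be a CM-quadratic space with respect to (F, *), with fixed field F₀, and v ∈ V ⊗_{ℚ_p} F the canonical eigenvector. Then 2·b(v, v*) lies in F₀× and equals the gauge of q: for w = Σ_σ σ(γ)σ(v) ∈ V with γ ∈ F, one has q(w) = Tr_{F₀/ℚ_p}(2b(v,v*)·N_{F/F₀}(γ)). -/
/-!
Over a field `E` receiving `[F : K]` embeddings, `E ⊗[K] F` splits as `E ^ Γ`, and the image
`τ(v)` of the canonical eigenvector spans the `τ`-line: `(1 ⊗ α) τ(v) = τ(α) τ(v)`. The CM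
relation `b(α x, y) = b(x, α* y)` makes `τ(v)` orthogonal to every `ρ(v)` except `ρ = τ ∘ *`,
while `τ(b(v, v*)) = b(τ(v), (τ ∘ *)(v))`. Expanding `q(w) = b(w, w)` for `w = Σ τ(γ) τ(v)` thus
leaves only the diagonal `Σ_τ τ(b(v, v*) γ γ*)`, a trace. Since the `τ(v)` span and `b` is
nondegenerate, `b(v, v*) ≠ 0`; symmetry of `b` and `** = 1` make it `*`-fixed.
-/

open scoped TensorProduct

noncomputable section

open LinearMap (BilinForm)

namespace LinearMap.BilinForm

variable {K M : Type*} [Field K] [AddCommGroup M] [Module K M]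

lemma eq_baseChange_of_tmul {A : Type*} [CommRing A] [Algebra K A] {b : BilinForm K M}
    {B : BilinForm A (A ⊗[K] M)}
    (h : ∀ (x y : A) (m n : M), B (x ⊗ₜ m) (y ⊗ₜ n) = x * y * algebraMap K A (b m n)) :
    B = b.baseChange A := by
  ext m n
  simp [h, baseChange_tmul, Algebra.smul_def, mul_comm]

lemma separatingLeft_baseChange [FiniteDimensional K M] {b : BilinForm K M}
    (hb : b.SeparatingLeft) (A : Type*) [CommRing A] [Algebra K A] :
    (b.baseChange A).SeparatingLeft := by
  intro u hu
  let e := Module.finBasis K M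
  let e' := (b.dualBasis (.ofSeparatingLeft hb) e).baseChange A
  have hrepr : ∀ k, e'.repr u k = b.baseChange A u (1 ⊗ₜ e k) := by
    intro k
    conv_rhs => rw [← e'.sum_repr u]
    simp [e', Module.Basis.baseChange_apply, baseChange_tmul, apply_dualBasis_left]
  exact e'.ext_elem fun k => by simp [hrepr, hu]

lemma baseChange_rTensor_algHom {A A' : Type*} [CommRing A] [CommRing A'] [Algebra K A]
    [Algebra K A'] (b : BilinForm K M) (τ : A →ₐ[K] A') (x y : A ⊗[K] M) :
    b.baseChange A' (τ.toLinearMap.rTensor M x) (τ.toLinearMap.rTensor M y) =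
      τ (b.baseChange A x y) := by
  induction x using TensorProduct.induction_on with
  | zero => simp
  | add x₁ x₂ h₁ h₂ => simp only [map_add, LinearMap.add_apply, h₁, h₂]
  | tmul a m =>
    induction y using TensorProduct.induction_on with
    | zero => simp
    | add y₁ y₂ h₁ h₂ => simp only [map_add, h₁, h₂]
    | tmul a' n => simp [baseChange_tmul]

lemma baseChange_one_tmul_mul {F A : Type*} [CommRing F] [Algebra K F] [CommRing A] [Algebra K A]
    {b : BilinForm K F} {σ : F → F} (hCM : ∀ α x y, b (α * x) y = b x (σ α * y))
    (α : F) (x y : A ⊗[K] F) :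
    b.baseChange A (((1 : A) ⊗ₜ α) * x) y = b.baseChange A x (((1 : A) ⊗ₜ σ α) * y) := by
  induction x using TensorProduct.induction_on with
  | zero => simp
  | add x₁ x₂ h₁ h₂ => simp only [mul_add, map_add, LinearMap.add_apply, h₁, h₂]
  | tmul a m =>
    induction y using TensorProduct.induction_on with
    | zero => simp
    | add y₁ y₂ h₁ h₂ => simp only [mul_add, map_add, h₁, h₂]
    | tmul a' n => simp [baseChange_tmul, hCM]

end LinearMap.BilinForm

/-- `trace_eq_sum_embeddings` wants an algebraically closed target; by counting, composing with
`E → AlgebraicClosure E` is a bijection on embeddings. -/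
lemma algebraMap_trace_eq_sum_algHom {K F E : Type*} [Field K] [Field F] [Field E] [Algebra K F]
    [Algebra K E] [FiniteDimensional K F] [Algebra.IsSeparable K F] [Fintype (F →ₐ[K] E)]
    (hcard : Fintype.card (F →ₐ[K] E) = Module.finrank K F) (x : F) :
    algebraMap K E (Algebra.trace K F x) = ∑ τ : F →ₐ[K] E, τ x := by
  let ι := IsScalarTower.toAlgHom K E (AlgebraicClosure E)
  have hι : Function.Bijective fun τ : F →ₐ[K] E => ι.comp τ := by
    refine (Fintype.bijective_iff_injective_and_card _).mpr ⟨fun τ τ' h => ?_, ?_⟩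
    · exact AlgHom.ext fun z => ι.injective (DFunLike.congr_fun h z)
    · rw [hcard, AlgHom.card]
  apply (algebraMap E (AlgebraicClosure E)).injective
  rw [← IsScalarTower.algebraMap_apply, trace_eq_sum_embeddings, map_sum]
  exact (Fintype.sum_bijective _ hι _ _ fun _ => rfl).symm

section Eigenvectors

variable {K F E : Type*} [Field K] [Field F] [Field E] [Algebra K F] [Algebra K E]

def IsEigenvectorFor (τ : F →ₐ[K] E) (u : E ⊗[K] F) : Prop :=
  ∀ α : F, ((1 : E) ⊗ₜ[K] α) * u = τ α • u

lemma isEigenvectorFor_id {v : F ⊗[K] F}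
    (h : ∀ α : F, Algebra.TensorProduct.includeRight α * v =
      Algebra.TensorProduct.includeLeft (S := K) α * v) :
    IsEigenvectorFor (AlgHom.id K F) v := fun α => by
  simpa [Algebra.TensorProduct.includeLeft_apply, Algebra.TensorProduct.includeRight_apply,
    Algebra.smul_def] using h α

lemma IsEigenvectorFor.map {E' : Type*} [Field E'] [Algebra K E'] {φ : F →ₐ[K] E}
    {u : E ⊗[K] F} (hu : IsEigenvectorFor φ u) (τ : E →ₐ[K] E') :
    IsEigenvectorFor (τ.comp φ) (Algebra.TensorProduct.map τ (AlgHom.id K F) u) := fun α => by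
  have h := congrArg (Algebra.TensorProduct.map τ (AlgHom.id K F)) (hu α)
  simpa [Algebra.smul_def] using h

/-- The `ρ`-coordinate of the splitting `E ⊗[K] F ≅ E ^ Γ`. -/
def evalEmb (ρ : F →ₐ[K] E) : E ⊗[K] F →ₐ[E] E :=
  Algebra.TensorProduct.lift (Algebra.ofId E E) ρ fun _ _ => Commute.all _ _

@[simp]
lemma evalEmb_tmul (ρ : F →ₐ[K] E) (x : E) (y : F) : evalEmb ρ (x ⊗ₜ y) = x * ρ y := rfl

lemma IsEigenvectorFor.evalEmb_eq_zero {τ ρ : F →ₐ[K] E} {u : E ⊗[K] F}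
    (hu : IsEigenvectorFor τ u) (hρ : ρ ≠ τ) : evalEmb ρ u = 0 := by
  obtain ⟨α, hα⟩ : ∃ α, ρ α ≠ τ α := by
    contrapose! hρ
    exact AlgHom.ext hρ
  have h := congrArg (evalEmb ρ) (hu α)
  rw [map_mul, map_smul, evalEmb_tmul, one_mul, smul_eq_mul] at h
  exact (mul_eq_mul_right_iff.mp h).resolve_left hα

lemma evalEmb_toLinearMap (ρ : F →ₐ[K] E) :
    (evalEmb ρ).toLinearMap = LinearMap.liftBaseChangeEquiv E ρ.toLinearMap := by
  ext; simp

lemma linearIndependent_evalEmb :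
    LinearIndependent E fun ρ : F →ₐ[K] E => (evalEmb ρ).toLinearMap := by
  rw [funext evalEmb_toLinearMap]
  exact (linearIndependent_algHom_toLinearMap K F E).map' _ (LinearMap.liftBaseChangeEquiv E).ker

variable [FiniteDimensional K F] [Fintype (F →ₐ[K] E)]

lemma eq_zero_of_forall_evalEmb_eq_zero
    (hcard : Fintype.card (F →ₐ[K] E) = Module.finrank K F) {u : E ⊗[K] F}
    (hu : ∀ ρ, evalEmb ρ u = 0) : u = 0 := by
  have hspan := LinearIndependent.span_eq_top_of_card_eq_finrank'
    (linearIndependent_evalEmb (K := K) (F := F) (E := E))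
    (by rw [Subspace.dual_finrank_eq, Module.finrank_baseChange, hcard])
  have h : Module.Dual.eval E _ u = 0 :=
    LinearMap.ext_on_range hspan fun ρ => by simpa using hu ρ
  exact (Module.forall_dual_apply_eq_zero_iff E u).mp fun φ => LinearMap.congr_fun h φ

lemma IsEigenvectorFor.evalEmb_ne_zero
    (hcard : Fintype.card (F →ₐ[K] E) = Module.finrank K F) {τ : F →ₐ[K] E} {u : E ⊗[K] F}
    (hu : IsEigenvectorFor τ u) (hu₀ : u ≠ 0) : evalEmb τ u ≠ 0 := fun h =>
  hu₀ <| eq_zero_of_forall_evalEmb_eq_zero hcard fun ρ => by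
    obtain rfl | hρ := eq_or_ne ρ τ
    exacts [h, hu.evalEmb_eq_zero hρ]

lemma span_range_eq_top_of_isEigenvectorFor
    (hcard : Fintype.card (F →ₐ[K] E) = Module.finrank K F) {u : (F →ₐ[K] E) → E ⊗[K] F}
    (hu : ∀ τ, IsEigenvectorFor τ (u τ)) (hu₀ : ∀ τ, u τ ≠ 0) :
    Submodule.span E (Set.range u) = ⊤ := by
  refine LinearIndependent.span_eq_top_of_card_eq_finrank' ?_
    (by rw [Module.finrank_baseChange, hcard])
  refine Fintype.linearIndependent_iff.mpr fun c hc ρ => ?_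
  have h := congrArg (evalEmb ρ) hc
  rw [map_sum, Finset.sum_eq_single ρ (fun τ _ hτ => by
      rw [map_smul, (hu τ).evalEmb_eq_zero hτ.symm, smul_zero]) (by simp),
    map_smul, smul_eq_mul, map_zero] at h
  exact (mul_eq_zero.mp h).resolve_right ((hu ρ).evalEmb_ne_zero hcard (hu₀ ρ))

end Eigenvectors

section StarPairing

variable {K F E : Type*} [Field K] [Field F] [Field E] [Algebra K F] [Algebra K E]
  {b : BilinForm K F} {σ : F →ₐ[K] F}

variable (b σ) in
/-- `b(x, x*)`, where `x*` applies the CM involution `σ` to the first tensor factor. -/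
def starPairing (x : F ⊗[K] F) : F :=
  b.baseChange F x (Algebra.TensorProduct.map σ (AlgHom.id K F) x)

lemma IsEigenvectorFor.baseChange_eq_zero (hσ : Function.Involutive σ)
    (hCM : ∀ α x y, b (α * x) y = b x (σ α * y)) {τ ρ : F →ₐ[K] E} {u u' : E ⊗[K] F}
    (hu : IsEigenvectorFor τ u) (hu' : IsEigenvectorFor ρ u') (hρ : ρ ≠ τ.comp σ) :
    b.baseChange E u u' = 0 := by
  by_contra h₀
  refine hρ (AlgHom.ext fun x => ?_)
  have h := BilinForm.baseChange_one_tmul_mul hCM (σ x) u u'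
  rw [hu, hu', hσ x, map_smul, map_smul, LinearMap.smul_apply, smul_eq_mul, smul_eq_mul] at h
  exact (mul_right_cancel₀ h₀ h).symm

lemma algHom_starPairing (τ : F →ₐ[K] E) (x : F ⊗[K] F) :
    τ (starPairing b σ x) =
      b.baseChange E (Algebra.TensorProduct.map τ (AlgHom.id K F) x)
        (Algebra.TensorProduct.map (τ.comp σ) (AlgHom.id K F) x) := by
  rw [starPairing, ← BilinForm.baseChange_rTensor_algHom, ← AlgHom.id_comp (AlgHom.id K F),
    Algebra.TensorProduct.map_comp]
  rfl

lemma starPairing_fixed (hb : LinearMap.IsSymm b) (hσ : Function.Involutive σ)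
    (x : F ⊗[K] F) : σ (starPairing b σ x) = starPairing b σ x := by
  have hσσ : σ.comp σ = AlgHom.id K F := AlgHom.ext hσ
  rw [algHom_starPairing, hσσ, Algebra.TensorProduct.map_id]
  exact (BilinForm.IsSymm.baseChange F hb).eq _ _

variable [FiniteDimensional K F] [Fintype (F →ₐ[K] E)]

variable (E) in
lemma starPairing_ne_zero (hcard : Fintype.card (F →ₐ[K] E) = Module.finrank K F)
    (hb : b.SeparatingLeft) (hσ : Function.Involutive σ)
    (hCM : ∀ α x y, b (α * x) y = b x (σ α * y)) {v : F ⊗[K] F}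
    (hv : IsEigenvectorFor (AlgHom.id K F) v) (hv₀ : v ≠ 0) : starPairing b σ v ≠ 0 := by
  obtain ⟨τ⟩ : Nonempty (F →ₐ[K] E) := Fintype.card_pos_iff.mp (hcard ▸ Module.finrank_pos)
  set u : (F →ₐ[K] E) → E ⊗[K] F := fun ρ => Algebra.TensorProduct.map ρ (AlgHom.id K F) v
  have hu : ∀ ρ, IsEigenvectorFor ρ (u ρ) := fun ρ => hv.map ρ
  have hu₀ : ∀ ρ, u ρ ≠ 0 := fun ρ => (map_ne_zero_iff _
    (Module.Flat.rTensor_preserves_injective_linearMap ρ.toLinearMap ρ.injective)).mpr hv₀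
  intro hc
  have horth : ∀ ρ, b.baseChange E (u τ) (u ρ) = 0 := fun ρ => by
    obtain rfl | hρ := eq_or_ne ρ (τ.comp σ)
    · rw [← algHom_starPairing, hc, map_zero]
    · exact (hu τ).baseChange_eq_zero hσ hCM (hu ρ) hρ
  have h : b.baseChange E (u τ) = 0 :=
    LinearMap.ext_on_range (span_range_eq_top_of_isEigenvectorFor hcard hu hu₀) horth
  exact hu₀ τ (BilinForm.separatingLeft_baseChange hb E _ fun w => by rw [h]; rfl)

lemma baseChange_sum_smul_map_eq_trace [Algebra.IsSeparable K F]
    (hcard : Fintype.card (F →ₐ[K] E) = Module.finrank K F)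
    (hσ : Function.Involutive σ) (hCM : ∀ α x y, b (α * x) y = b x (σ α * y))
    {v : F ⊗[K] F} (hv : IsEigenvectorFor (AlgHom.id K F) v) (γ : F) {w : E ⊗[K] F}
    (hw : w = ∑ τ : F →ₐ[K] E, τ γ • Algebra.TensorProduct.map τ (AlgHom.id K F) v) :
    b.baseChange E w w =
      algebraMap K E (Algebra.trace K F (starPairing b σ v * (γ * σ γ))) := by
  subst hw
  rw [algebraMap_trace_eq_sum_algHom hcard, BilinForm.sum_left]
  refine Finset.sum_congr rfl fun τ _ => ?_
  rw [map_smul, LinearMap.smul_apply, BilinForm.sum_right, Finset.sum_eq_single (τ.comp σ)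
      (fun ρ _ hρ => by rw [map_smul, (hv.map τ).baseChange_eq_zero hσ hCM (hv.map ρ) hρ,
        smul_zero]) (by simp),
    map_smul, map_mul, map_mul, algHom_starPairing]
  simp only [smul_eq_mul, AlgHom.comp_apply]
  ring

end StarPairing

theorem cm_gauge_via_eigenvector_general (p : ℕ) [Fact p.Prime]
    (F Ft : Type*) [Field F] [Field Ft] [Algebra ℚ_[p] F] [Algebra ℚ_[p] Ft]
    [FiniteDimensional ℚ_[p] F] [Fintype (F →ₐ[ℚ_[p]] Ft)]
    (hcard : Fintype.card (F →ₐ[ℚ_[p]] Ft) = Module.finrank ℚ_[p] F)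
    (ι : F →ₐ[ℚ_[p]] Ft)
    (σ : F ≃ₐ[ℚ_[p]] F) (hσinv : ∀ x, σ (σ x) = x)
    (q : QuadraticForm ℚ_[p] F)
    (b : F →ₗ[ℚ_[p]] F →ₗ[ℚ_[p]] ℚ_[p])
    (hsymm : ∀ x y, b x y = b y x)
    (hbq : ∀ x, b x x = q x)
    (hnd : ∀ x : F, (∀ y : F, b x y = 0) → x = 0)
    (hCM : ∀ (α x y : F), b (α * x) y = b x (σ α * y))
    (Bt : (Ft ⊗[ℚ_[p]] F) →ₗ[Ft] (Ft ⊗[ℚ_[p]] F) →ₗ[Ft] Ft)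
    (hBt : ∀ (x y : Ft) (a c : F),
      Bt (x ⊗ₜ[ℚ_[p]] a) (y ⊗ₜ[ℚ_[p]] c) = x * y * algebraMap ℚ_[p] Ft (b a c))
    (v : F ⊗[ℚ_[p]] F) (hv : v ≠ 0)
    (heig : ∀ α : F,
      (Algebra.TensorProduct.includeRight (R := ℚ_[p]) (A := F) α) * v =
        (Algebra.TensorProduct.includeLeft (R := ℚ_[p]) (S := ℚ_[p]) (B := F) α) * v) :
    ∃ a : F, σ a = a ∧ a ≠ 0 ∧
      ι a = 2 * Bt (Algebra.TensorProduct.map ι (AlgHom.id ℚ_[p] F) v)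
          (Algebra.TensorProduct.map (ι.comp σ.toAlgHom) (AlgHom.id ℚ_[p] F) v) ∧
      ∀ (γ w : F),
        ((1 : Ft) ⊗ₜ[ℚ_[p]] w =
          ∑ τ : F →ₐ[ℚ_[p]] Ft, τ γ • Algebra.TensorProduct.map τ (AlgHom.id ℚ_[p] F) v) →
        q w = (1 / 2) * Algebra.trace ℚ_[p] F (a * (γ * σ γ)) := by
  obtain rfl : Bt = BilinForm.baseChange Ft b := BilinForm.eq_baseChange_of_tmul hBt
  have hv' : IsEigenvectorFor (AlgHom.id ℚ_[p] F) v := isEigenvectorFor_id heig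
  have hσ : Function.Involutive σ.toAlgHom := hσinv
  have : CharZero F := charZero_of_injective_algebraMap (algebraMap ℚ_[p] F).injective
  refine ⟨2 * starPairing b σ.toAlgHom v, ?_, ?_, ?_, ?_⟩
  · rw [map_mul, map_ofNat]
    exact congrArg _ (starPairing_fixed ⟨hsymm⟩ hσ v)
  · exact mul_ne_zero two_ne_zero (starPairing_ne_zero Ft hcard hnd hσ hCM hv' hv)
  · rw [map_mul, map_ofNat, algHom_starPairing]
  · intro γ w hw
    have h := baseChange_sum_smul_map_eq_trace hcard hσ hCM hv' γ hw
    rw [BilinForm.baseChange_tmul, hbq, mul_one, Algebra.smul_def, mul_one] at h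
    have hq : q w = Algebra.trace ℚ_[p] F (starPairing b σ.toAlgHom v * (γ * σ γ)) :=
      (algebraMap ℚ_[p] Ft).injective h
    rw [hq, mul_assoc, two_mul, map_add]
    ring

/-- Let `(V, q)` be a CM-quadratic space with respect to `(F, σ)`
with fixed field `F₀` (here `V = F`, `b` the bilinear form of `q`, so `b(x,x) = q(x)`),
`ι : F → F̃` the distinguished embedding into the Galois closure, and
`v ∈ V ⊗_{ℚ_p} F = F ⊗_{ℚ_p} F` the canonical eigenvector.  Then `2·b(v, v*)` lies in
`F₀^×` — i.e. it is `ι(a)` for some `a ∈ F` with `σ(a) = a`, `a ≠ 0` — and it equals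
the gauge of `q`: for any `w ∈ V` whose coordinates in the basis `(τ(v))_{τ ∈ Γ}` of
`V ⊗ F̃` are `(τ(γ))_{τ ∈ Γ}` for some `γ ∈ F`, one has
`q(w) = Tr_{F₀/ℚ_p}(2b(v,v*)·N_{F/F₀}(γ)) = (1/2)·Tr_{F/ℚ_p}(a·γ·σ(γ))`. -/
theorem cm_gauge_via_eigenvector (p : ℕ) [Fact p.Prime]
    (F Ft : Type*) [Field F] [Field Ft] [Algebra ℚ_[p] F] [Algebra ℚ_[p] Ft]
    [FiniteDimensional ℚ_[p] F] [Fintype (F →ₐ[ℚ_[p]] Ft)]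
    (hcard : Fintype.card (F →ₐ[ℚ_[p]] Ft) = Module.finrank ℚ_[p] F)
    (ι : F →ₐ[ℚ_[p]] Ft)
    (σ : F ≃ₐ[ℚ_[p]] F) (hσinv : ∀ x, σ (σ x) = x) (hσne : σ ≠ AlgEquiv.refl)
    (q : QuadraticForm ℚ_[p] F)
    (b : F →ₗ[ℚ_[p]] F →ₗ[ℚ_[p]] ℚ_[p])
    (hsymm : ∀ x y, b x y = b y x)
    (hbq : ∀ x, b x x = q x)
    (hnd : ∀ x : F, (∀ y : F, b x y = 0) → x = 0)
    (hCM : ∀ (α x y : F), b (α * x) y = b x (σ α * y))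
    (Bt : (Ft ⊗[ℚ_[p]] F) →ₗ[Ft] (Ft ⊗[ℚ_[p]] F) →ₗ[Ft] Ft)
    (hBt : ∀ (x y : Ft) (a c : F),
      Bt (x ⊗ₜ[ℚ_[p]] a) (y ⊗ₜ[ℚ_[p]] c) = x * y * algebraMap ℚ_[p] Ft (b a c))
    (v : F ⊗[ℚ_[p]] F) (hv : v ≠ 0)
    (heig : ∀ α : F,
      (Algebra.TensorProduct.includeRight (R := ℚ_[p]) (A := F) α) * v =
        (Algebra.TensorProduct.includeLeft (R := ℚ_[p]) (S := ℚ_[p]) (B := F) α) * v) :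
    ∃ a : F, σ a = a ∧ a ≠ 0 ∧
      ι a = 2 * Bt (Algebra.TensorProduct.map ι (AlgHom.id ℚ_[p] F) v)
          (Algebra.TensorProduct.map (ι.comp σ.toAlgHom) (AlgHom.id ℚ_[p] F) v) ∧
      ∀ (γ w : F),
        ((1 : Ft) ⊗ₜ[ℚ_[p]] w =
          ∑ τ : F →ₐ[ℚ_[p]] Ft, τ γ • Algebra.TensorProduct.map τ (AlgHom.id ℚ_[p] F) v) →
        q w = (1 / 2) * Algebra.trace ℚ_[p] F (a * (γ * σ γ)) :=
  cm_gauge_via_eigenvector_general p F Ft hcard ι σ hσinv q b hsymm hbq hnd hCM Bt hBt v hv heig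

end
end
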